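/- arXiv:2208.12716 — 3 statements merged into one kernel-verified Lean document; each statement's English description precedes it below -/
import Mathlib

section
/- Let n, m ≥ 1 be natural numbers, let L, δ ≥ 0 and b₁, b₂, b₃ > 0 be real numbers. Let σ : EuclideanSpace ℝ (Fin m) → EuclideanSpace ℝ (Fin n) be L-Lipschitz, let y, y⋆ ∈ EuclideanSpace ℝ (Fin m) satisfy ‖y − y⋆‖₂ ≤ δ, and assume σ(y)ᵢ ≥ 1/b₃ and σ(y⋆)ᵢ ≥ 1/b₃ for every i. Let z⋆, μ : Fin n → ℝ satisfy |z⋆ᵢ| ≤ b₁ and |μᵢ| ≤ b₂ for every i. Then |∑ᵢ (z⋆ᵢ − μᵢ)² · (1/(2·σ(y)ᵢ²) − 1/(2·σ(y⋆)ᵢ²))| ≤ √n · L · δ · b₃³ · (b₁ + b₂)². -/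
/-! On `[1/b₃, ∞)` the map `x ↦ 1/(2x²)` is `b₃³`-Lipschitz and each weight `(z⋆ᵢ - μᵢ)²` is at
most `(b₁ + b₂)²`, so the sum is at most `(b₁ + b₂)² b₃³ ‖σ(y) - σ(y⋆)‖₁`. Cauchy–Schwarz gives
`‖·‖₁ ≤ √n ‖·‖₂`, and the Lipschitz bound on `σ` gives `‖σ(y) - σ(y⋆)‖₂ ≤ L δ`. -/

open Finset

theorem EuclideanSpace.sum_abs_le_sqrt_card_mul_norm {ι : Type*} [Fintype ι]
    (x : EuclideanSpace ℝ ι) : ∑ i, |x i| ≤ √(Fintype.card ι) * ‖x‖ := by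
  have h : (∑ i, |x i|) ^ 2 ≤ Fintype.card ι * ‖x‖ ^ 2 := by
    simpa [EuclideanSpace.norm_sq_eq] using
      sq_sum_le_card_mul_sum_sq (s := univ) (f := fun i => |x i|)
  rw [← Real.sqrt_sq (norm_nonneg x), ← Real.sqrt_mul (Nat.cast_nonneg _)]
  exact Real.le_sqrt_of_sq_le h

theorem sub_sq_le_add_sq_of_abs_le {x y b₁ b₂ : ℝ} (hx : |x| ≤ b₁) (hy : |y| ≤ b₂) :
    (x - y) ^ 2 ≤ (b₁ + b₂) ^ 2 := by
  rw [← sq_abs]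
  exact pow_le_pow_left₀ (abs_nonneg _) ((abs_sub _ _).trans (add_le_add hx hy)) 2

theorem abs_one_div_two_mul_sq_sub_le {a c b : ℝ} (hb : 0 < b) (ha : 1 / b ≤ a) (hc : 1 / b ≤ c) :
    |1 / (2 * a ^ 2) - 1 / (2 * c ^ 2)| ≤ b ^ 3 * |a - c| := by
  have ha₀ : 0 < a := (one_div_pos.2 hb).trans_le ha
  have hc₀ : 0 < c := (one_div_pos.2 hb).trans_le hc
  have ha' : a⁻¹ ≤ b := by rw [inv_le_comm₀ ha₀ hb, ← one_div]; exact ha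
  have hc' : c⁻¹ ≤ b := by rw [inv_le_comm₀ hc₀ hb, ← one_div]; exact hc
  have hfactor : 1 / (2 * a ^ 2) - 1 / (2 * c ^ 2)
      = (c - a) * ((a⁻¹ * c⁻¹ ^ 2 + a⁻¹ ^ 2 * c⁻¹) / 2) := by
    field_simp; ring
  have := ha₀.le
  have := hc₀.le
  have hweight : (a⁻¹ * c⁻¹ ^ 2 + a⁻¹ ^ 2 * c⁻¹) / 2 ≤ b ^ 3 := by
    calc (a⁻¹ * c⁻¹ ^ 2 + a⁻¹ ^ 2 * c⁻¹) / 2 ≤ (b * b ^ 2 + b ^ 2 * b) / 2 := by gcongr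
      _ = b ^ 3 := by ring
  have hweight₀ : 0 ≤ (a⁻¹ * c⁻¹ ^ 2 + a⁻¹ ^ 2 * c⁻¹) / 2 := by positivity
  rw [hfactor, abs_mul, abs_sub_comm, abs_of_nonneg hweight₀, mul_comm]
  exact mul_le_mul_of_nonneg_right hweight (abs_nonneg _)

theorem factor_out_quadratic_sigma_bound_general
    (n m : ℕ)
    (L δ : ℝ) (hL : 0 ≤ L)
    (b₁ b₂ b₃ : ℝ) (hb₃ : 0 < b₃)
    (σ : EuclideanSpace ℝ (Fin m) → EuclideanSpace ℝ (Fin n))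
    (hσ : ∀ a b : EuclideanSpace ℝ (Fin m), ‖σ a - σ b‖ ≤ L * ‖a - b‖)
    (y ystar : EuclideanSpace ℝ (Fin m))
    (hy : ‖y - ystar‖ ≤ δ)
    (hσy : ∀ i : Fin n, 1 / b₃ ≤ σ y i)
    (hσystar : ∀ i : Fin n, 1 / b₃ ≤ σ ystar i)
    (zstar μ : Fin n → ℝ)
    (hz : ∀ i, |zstar i| ≤ b₁)
    (hμ : ∀ i, |μ i| ≤ b₂) :
    |∑ i : Fin n, (zstar i - μ i) ^ 2 *
        (1 / (2 * (σ y i) ^ 2) - 1 / (2 * (σ ystar i) ^ 2))| ≤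
      Real.sqrt n * L * δ * b₃ ^ 3 * (b₁ + b₂) ^ 2 := by
  have hσ_close : ∑ i, |(σ y - σ ystar) i| ≤ Real.sqrt n * (L * δ) := by
    simpa using (EuclideanSpace.sum_abs_le_sqrt_card_mul_norm (σ y - σ ystar)).trans <|
      mul_le_mul_of_nonneg_left ((hσ y ystar).trans (mul_le_mul_of_nonneg_left hy hL))
        (Real.sqrt_nonneg _)
  calc |∑ i : Fin n, (zstar i - μ i) ^ 2 * (1 / (2 * (σ y i) ^ 2) - 1 / (2 * (σ ystar i) ^ 2))|
      ≤ ∑ i : Fin n, (b₁ + b₂) ^ 2 * (b₃ ^ 3 * |(σ y - σ ystar) i|) := by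
        refine (abs_sum_le_sum_abs _ _).trans (sum_le_sum fun i _ => ?_)
        rw [abs_mul, abs_sq, PiLp.sub_apply]
        exact mul_le_mul (sub_sq_le_add_sq_of_abs_le (hz i) (hμ i))
          (abs_one_div_two_mul_sq_sub_le hb₃ (hσy i) (hσystar i)) (abs_nonneg _) (sq_nonneg _)
    _ = (b₁ + b₂) ^ 2 * b₃ ^ 3 * ∑ i, |(σ y - σ ystar) i| := by
        rw [mul_assoc, mul_sum, mul_sum]
    _ ≤ (b₁ + b₂) ^ 2 * b₃ ^ 3 * (Real.sqrt n * (L * δ)) := by gcongr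
    _ = Real.sqrt n * L * δ * b₃ ^ 3 * (b₁ + b₂) ^ 2 := by ring

/-- Bound on the change of the quadratic term of a diagonal-Gaussian
log-density due to the perturbation of the standard-deviation network `σ`, with the mean
vector `μ` and latent `z⋆` held fixed. -/
theorem factor_out_quadratic_sigma_bound
    (n m : ℕ) (hn : 1 ≤ n) (hm : 1 ≤ m)
    (L δ : ℝ) (hL : 0 ≤ L) (hδ : 0 ≤ δ)
    (b₁ b₂ b₃ : ℝ) (hb₁ : 0 < b₁) (hb₂ : 0 < b₂) (hb₃ : 0 < b₃)
    (σ : EuclideanSpace ℝ (Fin m) → EuclideanSpace ℝ (Fin n))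
    (hσ : ∀ a b : EuclideanSpace ℝ (Fin m), ‖σ a - σ b‖ ≤ L * ‖a - b‖)
    (y ystar : EuclideanSpace ℝ (Fin m))
    (hy : ‖y - ystar‖ ≤ δ)
    (hσy : ∀ i : Fin n, 1 / b₃ ≤ σ y i)
    (hσystar : ∀ i : Fin n, 1 / b₃ ≤ σ ystar i)
    (zstar μ : Fin n → ℝ)
    (hz : ∀ i, |zstar i| ≤ b₁)
    (hμ : ∀ i, |μ i| ≤ b₂) :
    |∑ i : Fin n, (zstar i - μ i) ^ 2 *
        (1 / (2 * (σ y i) ^ 2) - 1 / (2 * (σ ystar i) ^ 2))| ≤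
      Real.sqrt n * L * δ * b₃ ^ 3 * (b₁ + b₂) ^ 2 :=
  factor_out_quadratic_sigma_bound_general n m L δ hL b₁ b₂ b₃ hb₃ σ hσ y ystar hy hσy hσystar zstar
    μ hz hμ
end

section
/- Let n, m ≥ 1 be natural numbers, let L, δ ≥ 0 and b₁, b₂, b₃ > 0 be real numbers. Let μ : EuclideanSpace ℝ (Fin m) → EuclideanSpace ℝ (Fin n) be L-Lipschitz, let y, y⋆ ∈ EuclideanSpace ℝ (Fin m) satisfy ‖y − y⋆‖₂ ≤ δ, and assume |μ(y)ᵢ| ≤ b₂ and |μ(y⋆)ᵢ| ≤ b₂ for every i. Let s : Fin n → ℝ satisfy sᵢ ≥ 1/b₃ for every i, and let z⋆ : Fin n → ℝ satisfy |z⋆ᵢ| ≤ b₁ for every i. Then |∑ᵢ (1/(2·sᵢ²)) · ((z⋆ᵢ − μ(y)ᵢ)² − (z⋆ᵢ − μ(y⋆)ᵢ)²)| ≤ √n · L · δ · (b₁ + b₂) · b₃². -/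
/-!
Expanding the difference of squares, each summand is bounded by `(b₁ + b₂) b₃² |μ(y)ᵢ - μ(y⋆)ᵢ|`;
the `ℓ¹` norm of `μ(y) - μ(y⋆)` is at most `√n` times its Euclidean norm (Cauchy–Schwarz),
which the Lipschitz bound controls by `L δ`.
-/

open Finset

theorem one_div_two_mul_sq_le {b s : ℝ} (hb : 0 < b) (hs : 1 / b ≤ s) :
    1 / (2 * s ^ 2) ≤ b ^ 2 / 2 := by
  have hs₀ : 0 < s := (one_div_pos.mpr hb).trans_le hs
  have hinv : 1 / s ≤ b := (one_div_le hb hs₀).mp hs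
  calc 1 / (2 * s ^ 2) = (1 / s) ^ 2 / 2 := by field_simp
    _ ≤ b ^ 2 / 2 := by gcongr

theorem abs_sub_sq_sub_sub_sq_le {z u v b₁ b₂ : ℝ} (hz : |z| ≤ b₁) (hu : |u| ≤ b₂)
    (hv : |v| ≤ b₂) : |(z - u) ^ 2 - (z - v) ^ 2| ≤ 2 * (b₁ + b₂) * |u - v| := by
  have hsum : |2 * z - u - v| ≤ 2 * (b₁ + b₂) :=
    calc |2 * z - u - v| ≤ |2 * z - u| + |v| := abs_sub _ _
      _ ≤ 2 * |z| + |u| + |v| := by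
        grw [abs_sub (2 * z) u, abs_mul, abs_two]
      _ ≤ 2 * (b₁ + b₂) := by linarith
  calc |(z - u) ^ 2 - (z - v) ^ 2| = |2 * z - u - v| * |u - v| := by
        rw [abs_sub_comm u v, ← abs_mul]; congr 1; ring
    _ ≤ 2 * (b₁ + b₂) * |u - v| := by gcongr

theorem abs_one_div_two_mul_sq_mul_sub_le {s z u v b₁ b₂ b₃ : ℝ} (hb₃ : 0 < b₃)
    (hs : 1 / b₃ ≤ s) (hz : |z| ≤ b₁) (hu : |u| ≤ b₂) (hv : |v| ≤ b₂) :
    |1 / (2 * s ^ 2) * ((z - u) ^ 2 - (z - v) ^ 2)| ≤ (b₁ + b₂) * b₃ ^ 2 * |u - v| :=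
  calc |1 / (2 * s ^ 2) * ((z - u) ^ 2 - (z - v) ^ 2)|
      = 1 / (2 * s ^ 2) * |(z - u) ^ 2 - (z - v) ^ 2| := by
        rw [abs_mul, abs_of_nonneg (by positivity)]
    _ ≤ b₃ ^ 2 / 2 * (2 * (b₁ + b₂) * |u - v|) :=
        mul_le_mul (one_div_two_mul_sq_le hb₃ hs) (abs_sub_sq_sub_sub_sq_le hz hu hv)
          (abs_nonneg _) (by positivity)
    _ = (b₁ + b₂) * b₃ ^ 2 * |u - v| := by ring

theorem factor_out_quadratic_mu_bound_general
    (n m : ℕ)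
    (L δ : ℝ) (hL : 0 ≤ L)
    (b₁ b₂ b₃ : ℝ) (hb₁ : 0 < b₁) (hb₂ : 0 < b₂) (hb₃ : 0 < b₃)
    (μ : EuclideanSpace ℝ (Fin m) → EuclideanSpace ℝ (Fin n))
    (hμlip : ∀ a b : EuclideanSpace ℝ (Fin m), ‖μ a - μ b‖ ≤ L * ‖a - b‖)
    (y ystar : EuclideanSpace ℝ (Fin m))
    (hy : ‖y - ystar‖ ≤ δ)
    (hμy : ∀ i : Fin n, |μ y i| ≤ b₂)
    (hμystar : ∀ i : Fin n, |μ ystar i| ≤ b₂)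
    (s : Fin n → ℝ) (hs : ∀ i, 1 / b₃ ≤ s i)
    (zstar : Fin n → ℝ) (hz : ∀ i, |zstar i| ≤ b₁) :
    |∑ i : Fin n, (1 / (2 * (s i) ^ 2)) *
        ((zstar i - μ y i) ^ 2 - (zstar i - μ ystar i) ^ 2)| ≤
      Real.sqrt n * L * δ * (b₁ + b₂) * b₃ ^ 2 := by
  have hμ : ‖μ y - μ ystar‖ ≤ L * δ := (hμlip y ystar).trans (by gcongr)
  have hℓ1 : ∑ i, |(μ y - μ ystar) i| ≤ √n * (L * δ) := by
    have h := EuclideanSpace.sum_abs_le_sqrt_card_mul_norm (μ y - μ ystar)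
    rw [Fintype.card_fin] at h
    exact h.trans (by gcongr)
  calc _ ≤ ∑ i, |1 / (2 * s i ^ 2) * ((zstar i - μ y i) ^ 2 - (zstar i - μ ystar i) ^ 2)| :=
        abs_sum_le_sum_abs _ _
    _ ≤ ∑ i, (b₁ + b₂) * b₃ ^ 2 * |(μ y - μ ystar) i| := by
        gcongr with i
        exact abs_one_div_two_mul_sq_mul_sub_le hb₃ (hs i) (hz i) (hμy i) (hμystar i)
    _ ≤ (b₁ + b₂) * b₃ ^ 2 * (√n * (L * δ)) := by
        rw [← mul_sum]; gcongr
    _ = √n * L * δ * (b₁ + b₂) * b₃ ^ 2 := by ring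

/-- Bound on the change of the quadratic term of a diagonal-Gaussian
log-density due to the perturbation of the mean network `μ`, with the standard deviations
`s` and latent `z⋆` held fixed. -/
theorem factor_out_quadratic_mu_bound
    (n m : ℕ) (hn : 1 ≤ n) (hm : 1 ≤ m)
    (L δ : ℝ) (hL : 0 ≤ L) (hδ : 0 ≤ δ)
    (b₁ b₂ b₃ : ℝ) (hb₁ : 0 < b₁) (hb₂ : 0 < b₂) (hb₃ : 0 < b₃)
    (μ : EuclideanSpace ℝ (Fin m) → EuclideanSpace ℝ (Fin n))
    (hμlip : ∀ a b : EuclideanSpace ℝ (Fin m), ‖μ a - μ b‖ ≤ L * ‖a - b‖)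
    (y ystar : EuclideanSpace ℝ (Fin m))
    (hy : ‖y - ystar‖ ≤ δ)
    (hμy : ∀ i : Fin n, |μ y i| ≤ b₂)
    (hμystar : ∀ i : Fin n, |μ ystar i| ≤ b₂)
    (s : Fin n → ℝ) (hs : ∀ i, 1 / b₃ ≤ s i)
    (zstar : Fin n → ℝ) (hz : ∀ i, |zstar i| ≤ b₁) :
    |∑ i : Fin n, (1 / (2 * (s i) ^ 2)) *
        ((zstar i - μ y i) ^ 2 - (zstar i - μ ystar i) ^ 2)| ≤
      Real.sqrt n * L * δ * (b₁ + b₂) * b₃ ^ 2 :=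
  factor_out_quadratic_mu_bound_general n m L δ hL b₁ b₂ b₃ hb₁ hb₂ hb₃ μ hμlip y ystar hy hμy
    hμystar s hs zstar hz
end

section
/- (Lemma 2, robustness of the main-flow.) Let n, m ≥ 1 be natural numbers and L, δ ≥ 0 real numbers. Let f : EuclideanSpace ℝ (Fin m) → EuclideanSpace ℝ (Fin n) be L-Lipschitz and let x, x⋆ ∈ EuclideanSpace ℝ (Fin m) satisfy ‖x⋆ − x‖₂ ≤ δ. Put z = f(x), z⋆ = f(x⋆), and let g(v) = −‖v‖₂²/2 − (n/2)·log(2π) denote the log-density of the standard Gaussian N(0, Iₙ). Then g(z⋆) − g(z) ≥ −L·δ·‖z‖₂ − L²·δ²/2. -/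
theorem sq_norm_le_of_norm_sub_le {E : Type*} [SeminormedAddCommGroup E] {u v : E} {r : ℝ}
    (h : ‖u - v‖ ≤ r) : ‖u‖ ^ 2 ≤ ‖v‖ ^ 2 + 2 * r * ‖v‖ + r ^ 2 := by
  have hu : ‖u‖ ≤ ‖v‖ + r := (norm_le_norm_add_norm_sub' u v).trans (by linarith)
  calc ‖u‖ ^ 2 ≤ (‖v‖ + r) ^ 2 := pow_le_pow_left₀ (norm_nonneg u) hu 2
    _ = ‖v‖ ^ 2 + 2 * r * ‖v‖ + r ^ 2 := by ring

theorem main_flow_robustness_general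
    (n m : ℕ)
    (L δ : ℝ) (hL : 0 ≤ L)
    (f : EuclideanSpace ℝ (Fin m) → EuclideanSpace ℝ (Fin n))
    (hf : ∀ a b : EuclideanSpace ℝ (Fin m), ‖f a - f b‖ ≤ L * ‖a - b‖)
    (x xstar : EuclideanSpace ℝ (Fin m))
    (hx : ‖xstar - x‖ ≤ δ) :
    (fun v : EuclideanSpace ℝ (Fin n) =>
        -‖v‖ ^ 2 / 2 - (n : ℝ) / 2 * Real.log (2 * Real.pi)) (f xstar) -
      (fun v : EuclideanSpace ℝ (Fin n) =>
        -‖v‖ ^ 2 / 2 - (n : ℝ) / 2 * Real.log (2 * Real.pi)) (f x) ≥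
      -(L * δ * ‖f x‖) - L ^ 2 * δ ^ 2 / 2 := by
  have hz : ‖f xstar - f x‖ ≤ L * δ := (hf xstar x).trans (mul_le_mul_of_nonneg_left hx hL)
  have hsq := sq_norm_le_of_norm_sub_le hz
  dsimp only
  linarith

/-- **Lemma 2, robustness of the main-flow.** If the main-flow
`f` is `L`-Lipschitz and the input is perturbed by at most `δ` in Euclidean norm,
the standard-Gaussian log-density `g(v) = −‖v‖²/2 − (n/2)·log(2π)` of the latent
drops by at most `L·δ·‖z‖ + L²·δ²/2`. -/
theorem main_flow_robustness
    (n m : ℕ) (hn : 1 ≤ n) (hm : 1 ≤ m)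
    (L δ : ℝ) (hL : 0 ≤ L) (hδ : 0 ≤ δ)
    (f : EuclideanSpace ℝ (Fin m) → EuclideanSpace ℝ (Fin n))
    (hf : ∀ a b : EuclideanSpace ℝ (Fin m), ‖f a - f b‖ ≤ L * ‖a - b‖)
    (x xstar : EuclideanSpace ℝ (Fin m))
    (hx : ‖xstar - x‖ ≤ δ) :
    (fun v : EuclideanSpace ℝ (Fin n) =>
        -‖v‖ ^ 2 / 2 - (n : ℝ) / 2 * Real.log (2 * Real.pi)) (f xstar) -
      (fun v : EuclideanSpace ℝ (Fin n) =>
        -‖v‖ ^ 2 / 2 - (n : ℝ) / 2 * Real.log (2 * Real.pi)) (f x) ≥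
      -(L * δ * ‖f x‖) - L ^ 2 * δ ^ 2 / 2 :=
  main_flow_robustness_general n m L δ hL f hf x xstar hx
end
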